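/- Let A be a commutative ℚ-algebra and R ∈ A⟦z⟧ a formal power series with zero constant term; set w := z·exp(−R) ∈ A⟦z⟧. Then for every integer a ≥ 1, the series z^a expands coefficientwise as z^a = Σ_{μ ≥ 1} (a/μ)·([z^{μ−a}] exp(μ·R))·w^μ; explicitly, for every n ≥ 0, the coefficient of z^n in z^a equals Σ_{μ=1}^{n} (a/μ)·([z^{μ−a}] exp(μ·R))·([z^n] w^μ), where [z^{μ−a}] exp(μ·R) is interpreted as 0 when μ < a. -/

import Mathlib

/-!
The functionals `L_m(F) = [z^m] (z F' · e^{mR})` are triangular: `L_m(F)` is `m [z^m] F` plus a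
combination of lower coefficients of `F`, so over a `ℚ`-algebra the values `L_m(F)`, `m ≤ n`,
together with the constant term determine `F` up to order `n`. On the powers
`w^μ = z^μ e^{-μR}` they are diagonal, `L_m(w^μ) = m δ_{μm}`: indeed
`z (w^μ)' e^{mR} = μ z^μ (1 - zR') e^{(m-μ)R}`, and `[z^k] ((1 - zR') e^{kR}) = δ_{k0}` because
`z (e^{kR})' = k zR' e^{kR}`. As `L_m(z^a) = a [z^{m-a}] e^{mR}`, the series `z^a` and
`Σ_{μ ≤ n} (a/μ) [z^{μ-a}] e^{μR} w^μ` have the same `L_m` for all `m ≤ n`.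
-/

open PowerSeries

/-- The formal exponential of a power series `F` over a commutative `ℚ`-algebra.
For `F` with zero constant term this is `exp F = Σ_k F^k/k!` (the coefficient of
`z^n` only receives contributions from `k ≤ n` since `F^k` has order `≥ k`). -/
noncomputable def pexp (A : Type*) [CommRing A] [Algebra ℚ A] (F : PowerSeries A) :
    PowerSeries A :=
  PowerSeries.mk fun n =>
    ∑ k ∈ Finset.range (n + 1), ((k.factorial : ℚ))⁻¹ • PowerSeries.coeff (R := A) n (F ^ k)

attribute [local instance] IsAddTorsionFree.of_module_rat

namespace PowerSeries

variable {A : Type*} [CommRing A]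

theorem coeff_X_mul_derivative (F : A⟦X⟧) (n : ℕ) :
    coeff n (X * d⁄dX A F) = n • coeff n F := by
  cases n with
  | zero => simp
  | succ n => rw [coeff_succ_X_mul, coeff_derivative, nsmul_eq_mul, mul_comm]; push_cast; rfl

theorem X_mul_derivative_X_pow (a : ℕ) : X * d⁄dX A (X ^ a) = a • X ^ a := by
  cases a with
  | zero => simp
  | succ a => rw [derivative_pow, derivative_X, Nat.add_sub_cancel, pow_succ, nsmul_eq_mul]; ring

theorem coeff_pow_of_lt {F : A⟦X⟧} (hF : constantCoeff F = 0) {n k : ℕ} (h : n < k) :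
    coeff n (F ^ k) = 0 := by
  obtain ⟨G, rfl⟩ := X_dvd_iff.2 hF
  rw [mul_pow, coeff_X_pow_mul', if_neg h.not_ge]

theorem coeff_eq_of_coeff_X_mul_derivative_mul_eq [IsAddTorsionFree A] {F G : A⟦X⟧}
    {E : ℕ → A⟦X⟧} (hE : ∀ m, IsUnit (constantCoeff (E m)))
    (h0 : constantCoeff F = constantCoeff G) {N : ℕ}
    (h : ∀ m ≤ N, coeff m (X * d⁄dX A F * E m) = coeff m (X * d⁄dX A G * E m)) :
    ∀ m ≤ N, coeff m F = coeff m G := by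
  set H := F - G
  suffices ∀ m ≤ N, coeff m H = 0 from fun m hm => sub_eq_zero.1 (by simpa [H] using this m hm)
  intro m
  induction m using Nat.strong_induction_on with
  | _ m ih =>
  intro hm
  rcases Nat.eq_zero_or_pos m with rfl | hm0
  · simp [H, h0]
  have hdiag : coeff m (X * d⁄dX A H * E m) = m • coeff m H * constantCoeff (E m) := by
    rw [coeff_mul, Finset.sum_eq_single (m, 0)]
    · rw [coeff_X_mul_derivative, coeff_zero_eq_constantCoeff]
    · rintro ⟨i, j⟩ hij hne
      rw [Finset.HasAntidiagonal.mem_antidiagonal] at hij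
      have hi : i < m := by
        rcases Nat.eq_zero_or_pos j with rfl | hj
        · simp_all
        · omega
      rw [coeff_X_mul_derivative, ih i hi (by omega), smul_zero, zero_mul]
    · simp
  have hzero : coeff m (X * d⁄dX A H * E m) = 0 := by
    rw [map_sub, mul_sub, sub_mul, map_sub, h m hm, sub_self]
  rw [hdiag, (hE m).mul_left_eq_zero] at hzero
  exact (nsmul_eq_zero_iff_right hm0.ne').1 hzero

end PowerSeries

section

variable {A : Type*} [CommRing A] [Algebra ℚ A]

@[simp] theorem constantCoeff_pexp (F : A⟦X⟧) : constantCoeff (pexp A F) = 1 := by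
  rw [← coeff_zero_eq_constantCoeff_apply, pexp, coeff_mk]
  simp

theorem pexp_eq_subst_exp {F : A⟦X⟧} (hF : constantCoeff F = 0) :
    pexp A F = (exp A).subst F := by
  ext n
  rw [pexp, coeff_mk, coeff_subst' (HasSubst.of_constantCoeff_zero' hF),
    finsum_eq_sum_of_support_subset (s := Finset.range (n + 1))]
  · refine Finset.sum_congr rfl fun k _ => ?_
    rw [coeff_exp, algebraMap_smul, one_div]
  · intro k hk
    by_contra hkn
    simp only [Finset.coe_range, Set.mem_Iio, not_lt] at hkn
    exact hk (by simp only [coeff_pow_of_lt hF (show n < k by omega), smul_zero])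

theorem derivative_pexp {F : A⟦X⟧} (hF : constantCoeff F = 0) :
    d⁄dX A (pexp A F) = pexp A F * d⁄dX A F := by
  rw [pexp_eq_subst_exp hF, derivative_subst (HasSubst.of_constantCoeff_zero' hF),
    derivative_exp]

theorem pexp_mul_pexp_neg {F : A⟦X⟧} (hF : constantCoeff F = 0) :
    pexp A F * pexp A (-F) = 1 := by
  refine derivative.ext ?_ (by simp)
  rw [Derivation.leibniz, derivative_pexp hF, derivative_pexp (by simp [hF]), map_neg,
    derivative_one, smul_eq_mul, smul_eq_mul]
  ring

theorem eq_pexp_of_derivative_eq {F P : A⟦X⟧} (hF : constantCoeff F = 0)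
    (hP : d⁄dX A P = P * d⁄dX A F) (hP0 : constantCoeff P = 1) : P = pexp A F := by
  have hF' : constantCoeff (-F) = 0 := by simp [hF]
  have h : P * pexp A (-F) = 1 := by
    refine derivative.ext ?_ (by simp [hP0])
    rw [Derivation.leibniz, derivative_pexp hF', hP, map_neg, derivative_one, smul_eq_mul,
      smul_eq_mul]
    ring
  calc P = P * pexp A (-F) * pexp A F := by
        rw [mul_assoc, mul_comm (pexp A (-F)), pexp_mul_pexp_neg hF, mul_one]
    _ = pexp A F := by rw [h, one_mul]

theorem pexp_zero : pexp A (0 : A⟦X⟧) = 1 :=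
  (eq_pexp_of_derivative_eq (by simp) (by simp) (by simp)).symm

theorem pexp_add {F G : A⟦X⟧} (hF : constantCoeff F = 0) (hG : constantCoeff G = 0) :
    pexp A (F + G) = pexp A F * pexp A G := by
  refine (eq_pexp_of_derivative_eq (by simp [hF, hG]) ?_ (by simp)).symm
  rw [Derivation.leibniz, derivative_pexp hF, derivative_pexp hG, map_add, smul_eq_mul,
    smul_eq_mul]
  ring

theorem pexp_pow {F : A⟦X⟧} (hF : constantCoeff F = 0) (k : ℕ) :
    pexp A F ^ k = pexp A ((k : ℚ) • F) := by
  induction k with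
  | zero => simp [pexp_zero]
  | succ k ih => rw [pow_succ, ih, ← pexp_add (by simp [hF]) hF, Nat.cast_succ, add_smul, one_smul]

theorem coeff_one_sub_X_mul_derivative_mul_pexp {R : A⟦X⟧} (hR : constantCoeff R = 0) (k : ℕ) :
    coeff k ((1 - X * d⁄dX A R) * pexp A ((k : ℚ) • R)) = if k = 0 then 1 else 0 := by
  rcases Nat.eq_zero_or_pos k with rfl | hk
  · simp
  set E := pexp A ((k : ℚ) • R)
  have hXE : X * d⁄dX A E = k • (X * d⁄dX A R * E) := by
    rw [derivative_pexp (by simp [hR]), Derivation.map_smul_of_tower,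
      Nat.cast_smul_eq_nsmul ℚ k (d⁄dX A R), mul_smul_comm, mul_smul_comm]
    ring
  have h := coeff_X_mul_derivative E k
  rw [hXE, map_nsmul] at h
  rw [if_neg hk.ne', sub_mul, one_mul, map_sub, sub_eq_zero]
  exact (nsmul_right_injective hk.ne' h).symm

theorem X_mul_derivative_pow_mul_pexp {R : A⟦X⟧} (hR : constantCoeff R = 0) (μ : ℕ) (c : ℚ) :
    X * d⁄dX A ((X * pexp A (-R)) ^ μ) * pexp A (c • R) =
      μ • (X ^ μ * ((1 - X * d⁄dX A R) * pexp A ((c - μ) • R))) := by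
  cases μ with
  | zero => simp
  | succ μ =>
    have hR' : constantCoeff (-R) = 0 := by simp [hR]
    have hQ : pexp A (-R) ^ (μ + 1) * pexp A (c • R) = pexp A ((c - ↑(μ + 1)) • R) := by
      rw [pexp_pow hR', ← pexp_add (by simp [hR]) (by simp [hR])]
      congr 1
      rw [sub_smul, smul_neg]
      abel
    rw [← hQ, derivative_pow, Derivation.leibniz, derivative_X, derivative_pexp hR', map_neg,
      smul_eq_mul, smul_eq_mul, nsmul_eq_mul, Nat.add_sub_cancel]
    ring

theorem coeff_X_mul_derivative_pow_mul_pexp {R : A⟦X⟧} (hR : constantCoeff R = 0) (μ m : ℕ) :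
    coeff m (X * d⁄dX A ((X * pexp A (-R)) ^ μ) * pexp A ((m : ℚ) • R)) =
      if μ = m then (m : A) else 0 := by
  rw [X_mul_derivative_pow_mul_pexp hR, map_nsmul, coeff_X_pow_mul']
  by_cases hle : μ ≤ m
  · rw [if_pos hle, ← Nat.cast_sub hle, coeff_one_sub_X_mul_derivative_mul_pexp hR]
    by_cases heq : μ = m
    · rw [if_pos (by omega), if_pos heq, heq, nsmul_one]
    · rw [if_neg (by omega), if_neg heq, smul_zero]
  · rw [if_neg hle, if_neg (by omega), smul_zero]

theorem coeff_X_mul_derivative_sum_smul_pow_mul_pexp {R : A⟦X⟧} (hR : constantCoeff R = 0)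
    (s : Finset ℕ) (c : ℕ → A) (m : ℕ) :
    coeff m (X * d⁄dX A (∑ μ ∈ s, c μ • (X * pexp A (-R)) ^ μ) * pexp A ((m : ℚ) • R)) =
      if m ∈ s then c m * m else 0 := by
  have hterm : ∀ μ, coeff m (X * d⁄dX A (c μ • (X * pexp A (-R)) ^ μ) * pexp A ((m : ℚ) • R)) =
      c μ * if μ = m then (m : A) else 0 := fun μ => by
    rw [Derivation.map_smul, mul_smul_comm, smul_mul_assoc, coeff_smul,
      coeff_X_mul_derivative_pow_mul_pexp hR, smul_eq_mul]
  simp only [map_sum, Finset.mul_sum, Finset.sum_mul, hterm, mul_ite, mul_zero]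
  exact Finset.sum_ite_eq' s m _

noncomputable def lagrangeCoeff (R : A⟦X⟧) (a μ : ℕ) : A :=
  ((a : ℚ) / (μ : ℚ)) • (if a ≤ μ then coeff (μ - a) (pexp A ((μ : ℚ) • R)) else 0)

theorem lagrangeCoeff_mul_natCast (R : A⟦X⟧) (a : ℕ) {m : ℕ} (hm : 1 ≤ m) :
    lagrangeCoeff R a m * m = a * (if a ≤ m then coeff (m - a) (pexp A ((m : ℚ) • R)) else 0) := by
  rw [lagrangeCoeff, smul_mul_assoc, mul_comm, ← nsmul_eq_mul, ← Nat.cast_smul_eq_nsmul ℚ,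
    smul_smul, div_mul_cancel₀ _ (Nat.cast_ne_zero.2 (by omega)), Nat.cast_smul_eq_nsmul,
    nsmul_eq_mul]

theorem coeff_X_pow_eq_coeff_sum_lagrangeCoeff_smul_pow {R : A⟦X⟧} (hR : constantCoeff R = 0)
    {a : ℕ} (ha : 1 ≤ a) {n m : ℕ} (hm : m ≤ n) :
    coeff m (X ^ a) =
      coeff m (∑ μ ∈ Finset.Icc 1 n, lagrangeCoeff R a μ • (X * pexp A (-R)) ^ μ) := by
  refine coeff_eq_of_coeff_X_mul_derivative_mul_eq (E := fun k => pexp A ((k : ℚ) • R))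
    (fun k => by simp) ?_ ?_ m hm
  · rw [map_pow, constantCoeff_X, zero_pow (by omega), map_sum]
    refine (Finset.sum_eq_zero fun μ hμ => ?_).symm
    have : μ ≠ 0 := by rw [Finset.mem_Icc] at hμ; omega
    simp [this]
  · intro k _
    rw [coeff_X_mul_derivative_sum_smul_pow_mul_pexp hR, X_mul_derivative_X_pow, smul_mul_assoc,
      map_nsmul, coeff_X_pow_mul']
    by_cases hk : k ∈ Finset.Icc 1 n
    · rw [if_pos hk, lagrangeCoeff_mul_natCast R a (Finset.mem_Icc.1 hk).1, nsmul_eq_mul]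
    · rw [if_neg hk, if_neg (by rw [Finset.mem_Icc] at hk; omega), smul_zero]

end

/-- For every `n ≥ 0`, the coefficient of `z^n` in `z^a` equals
`Σ_{μ=1}^{n} (a/μ)·([z^{μ−a}] exp(μ·R))·([z^n] (z·exp(−R))^μ)`, where
`[z^{μ−a}] exp(μ·R)` is interpreted as `0` when `μ < a`. -/
theorem statement1 (A : Type*) [CommRing A] [Algebra ℚ A] (R : PowerSeries A)
    (hR : PowerSeries.constantCoeff (R := A) R = 0) (a : ℕ) (ha : 1 ≤ a) (n : ℕ) :
    PowerSeries.coeff (R := A) n (PowerSeries.X ^ a) =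
      ∑ μ ∈ Finset.Icc 1 n,
        ((a : ℚ) / (μ : ℚ)) •
          ((if a ≤ μ then PowerSeries.coeff (R := A) (μ - a) (pexp A ((μ : ℚ) • R)) else 0) *
            PowerSeries.coeff (R := A) n ((PowerSeries.X * pexp A (-R)) ^ μ)) := by
  rw [coeff_X_pow_eq_coeff_sum_lagrangeCoeff_smul_pow hR ha le_rfl, map_sum]
  refine Finset.sum_congr rfl fun μ _ => ?_
  rw [coeff_smul, lagrangeCoeff, smul_eq_mul, smul_mul_assoc]
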